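/- Let f : E → ℝ∪{+∞} with f(x) finite. A vector v lies in the proximal subdifferential of f at x with global parameter r = 1/α (i.e., f(y) ≥ f(x) + ⟨v, y−x⟩ − (1/(2α))|y−x|² for all y) if and only if x ∈ P_α f(x + αv), and this holds if and only if f_α(x + αv) = f(x) + (α/2)|v|². -/

import Mathlib

/-- The Moreau envelope. -/
noncomputable def mEnv {E : Type*} [NormedAddCommGroup E] [InnerProductSpace ℝ E]
    (f : E → EReal) (α : ℝ) (x : E) : EReal :=
  ⨅ y, f y + ((‖y - x‖ ^ 2 / (2 * α) : ℝ) : EReal)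

/-- The proximal mapping `P_α f(x) = argmin_y { f(y) + ‖y−x‖²/(2α) }`. -/
def proxSet {E : Type*} [NormedAddCommGroup E] [InnerProductSpace ℝ E]
    (f : E → EReal) (α : ℝ) (x : E) : Set E :=
  {y | ∀ z, f y + ((‖y - x‖ ^ 2 / (2 * α) : ℝ) : EReal)
      ≤ f z + ((‖z - x‖ ^ 2 / (2 * α) : ℝ) : EReal)}

/-!
Completing the square,
`‖z - (x + αv)‖²/(2α) = ‖z - x‖²/(2α) - ⟪v, z - x⟫ + (α/2)‖v‖²`,
so the proximal objective at `x + αv`, shifted by the constant `(α/2)‖v‖²`, is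
`f z + ‖z - x‖²/(2α) - ⟪v, z - x⟫`. It is minimised at `z = x` exactly when `f` lies above the
concave quadratic `f x + ⟪v, z - x⟫ - ‖z - x‖²/(2α)`, and exactly when the Moreau envelope,
the infimum of the objective, is attained there.
-/

section

open scoped RealInnerProductSpace

variable {E : Type*} [NormedAddCommGroup E] [InnerProductSpace ℝ E]

lemma EReal.coe_le_add_coe_iff (a b : ℝ) (g : EReal) :
    (a : EReal) ≤ g + b ↔ ((a - b : ℝ) : EReal) ≤ g := by
  rw [EReal.coe_sub, EReal.sub_le_iff_le_add (.inl (EReal.coe_ne_bot b))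
    (.inl (EReal.coe_ne_top b))]

lemma norm_sub_smul_sq_div (w v : E) {α : ℝ} (hα : α ≠ 0) :
    ‖w - α • v‖ ^ 2 / (2 * α) = ‖w‖ ^ 2 / (2 * α) - ⟪v, w⟫ + α / 2 * ‖v‖ ^ 2 := by
  rw [norm_sub_sq_real, real_inner_smul_right, norm_smul, real_inner_comm, mul_pow,
    Real.norm_eq_abs, sq_abs]
  field_simp

lemma mem_proxSet_iff_mEnv_eq (f : E → EReal) (α : ℝ) (x y : E) :
    y ∈ proxSet f α x ↔ mEnv f α x = f y + ((‖y - x‖ ^ 2 / (2 * α) : ℝ) : EReal) :=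
  le_iInf_iff.symm.trans ⟨fun h => le_antisymm (iInf_le _ y) h, fun h => h.ge⟩

lemma proximal_subgradient_iff_mem_proxSet (f : E → EReal) {x : E} {fx : ℝ}
    (hfx : f x = (fx : EReal)) (v : E) {α : ℝ} (hα : α ≠ 0) :
    (∀ y, f x + ((⟪v, y - x⟫ - ‖y - x‖ ^ 2 / (2 * α) : ℝ) : EReal) ≤ f y)
      ↔ x ∈ proxSet f α (x + α • v) := by
  refine forall_congr' fun y => ?_
  have hshift : ∀ z : E, z - (x + α • v) = (z - x) - α • v := fun z => by abel
  rw [hfx, hshift, hshift, norm_sub_smul_sq_div _ _ hα, norm_sub_smul_sq_div _ _ hα,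
    ← EReal.coe_add, ← EReal.coe_add, EReal.coe_le_add_coe_iff]
  convert Iff.rfl using 3
  simp only [sub_self, norm_zero, inner_zero_right]
  ring

end

theorem statement3 {E : Type*} [NormedAddCommGroup E] [InnerProductSpace ℝ E]
    (f : E → EReal)
    (x : E) (fx : ℝ) (hfx : f x = (fx : EReal))
    (v : E) (α : ℝ) (hα : 0 < α) :
    ((∀ y, f x + (((inner ℝ v (y - x) : ℝ) - ‖y - x‖ ^ 2 / (2 * α) : ℝ) : EReal) ≤ f y)
        ↔ x ∈ proxSet f α (x + α • v))
      ∧ (x ∈ proxSet f α (x + α • v)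
        ↔ mEnv f α (x + α • v) = f x + ((α / 2 * ‖v‖ ^ 2 : ℝ) : EReal)) := by
  refine ⟨proximal_subgradient_iff_mem_proxSet f hfx v hα.ne', ?_⟩
  rw [mem_proxSet_iff_mEnv_eq, sub_add_cancel_left, norm_neg, norm_smul, Real.norm_eq_abs,
    abs_of_pos hα]
  congr! 3
  field_simp
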